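/- arXiv:2603.26321 — 4 statements merged into one kernel-verified Lean document; each statement's English description precedes it below -/
import Mathlib

section
/- Let H be a complex Hilbert space, let T1, T2 be commuting contractions on H, and set T = T1 T2. Let D_{T1}, D_{T2}, D_T be the positive square roots of I − T1*T1, I − T2*T2, I − T*T respectively. Then for every h ∈ H: (a) ‖D_{T1} h‖² + ‖D_{T2}(T1 h)‖² = ‖D_T h‖², and (b) ‖D_{T1}(T2 h)‖² + ‖D_{T2} h‖² = ‖D_T h‖². Consequently the maps W1 : D_T h ↦ (D_{T1} h, D_{T2} T1 h) and W2 : D_T h ↦ (D_{T1} T2 h, D_{T2} h) extend to linear isometries from the defect space of T into H ⊕₂ H. -/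
/-!
If `D` is self-adjoint with `D² = I - T*T`, then `‖D h‖² = ‖h‖² - ‖T h‖²`. Applied to `T1`, `T2`
and `T1 T2 = T2 T1`, both defect identities become telescoping sums such as
`(‖h‖² - ‖T1 h‖²) + (‖T1 h‖² - ‖T2 T1 h‖²) = ‖h‖² - ‖T1 T2 h‖²`. They say that `D h ↦ (D1 h, D2 T1 h)`
(resp. `(D1 T2 h, D2 h)`) preserves norms, so it is well defined and isometric on the range of `D`,
and extends by continuity to its closure.
-/

open ContinuousLinearMap

theorem IsSelfAdjoint.norm_apply_sq_of_comp_self_eq_one_sub {𝕜 E : Type*} [RCLike 𝕜]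
    [NormedAddCommGroup E] [InnerProductSpace 𝕜 E] [CompleteSpace E] {D : E →L[𝕜] E}
    (hD : IsSelfAdjoint D) (T : E →L[𝕜] E) (hDD : D ∘L D = 1 - adjoint T ∘L T) (x : E) :
    ‖D x‖ ^ 2 = ‖x‖ ^ 2 - ‖T x‖ ^ 2 := by
  rw [apply_norm_sq_eq_inner_adjoint_right, hD.adjoint_eq, hDD, sub_apply, one_apply_eq_self,
    inner_sub_right, map_sub, ← apply_norm_sq_eq_inner_adjoint_right, inner_self_eq_norm_sq]

section Extension

variable {𝕜 E F F₁ F₂ G : Type*} [NontriviallyNormedField 𝕜] [AddCommGroup E] [Module 𝕜 E]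
  [NormedAddCommGroup F] [NormedSpace 𝕜 F] [CompleteSpace F]
  [NormedAddCommGroup F₁] [NormedSpace 𝕜 F₁] [CompleteSpace F₁]
  [NormedAddCommGroup F₂] [NormedSpace 𝕜 F₂] [CompleteSpace F₂]
  [SeminormedAddCommGroup G] [NormedSpace 𝕜 G]

theorem LinearMap.exists_linearIsometry_topologicalClosure_range (f : E →ₗ[𝕜] F)
    (D : E →ₗ[𝕜] G) (hfD : ∀ x, ‖f x‖ = ‖D x‖) :
    ∃ W : (LinearMap.range D).topologicalClosure →ₗᵢ[𝕜] F, ∀ x,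
      W ⟨D x, Submodule.le_topologicalClosure _ (LinearMap.mem_range_self D x)⟩ = f x := by
  set e : E →ₗ[𝕜] (LinearMap.range D).topologicalClosure :=
    D.codRestrict _ fun x => Submodule.le_topologicalClosure _ (LinearMap.mem_range_self D x)
  have he_norm : ∀ x, ‖f x‖ = ‖e x‖ := hfD
  have he_dense : DenseRange e := by
    refine Subtype.dense_iff.2 ?_
    rw [← Set.range_comp]
    exact (Submodule.topologicalClosure_coe _).le.trans_eq (by rw [LinearMap.coe_range]; rfl)
  have hbound : ∃ C, ∀ x, ‖f x‖ ≤ C * ‖e x‖ := ⟨1, fun x => by rw [he_norm, one_mul]⟩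
  have hW_eq : ∀ x, f.extendOfNorm e (e x) = f x := extendOfNorm_eq he_dense hbound
  have hW_norm : ∀ y, ‖f.extendOfNorm e y‖ = ‖y‖ :=
    fun y => he_dense.induction_on y (isClosed_eq (by fun_prop) continuous_norm) fun x => by
      rw [hW_eq, he_norm]
  exact ⟨⟨f.extendOfNorm e, hW_norm⟩, hW_eq⟩

theorem exists_linearIsometry_topologicalClosure_range_toLp_prod
    (A : E →ₗ[𝕜] F₁) (B : E →ₗ[𝕜] F₂) (D : E →ₗ[𝕜] G)
    (hABD : ∀ x, ‖A x‖ ^ 2 + ‖B x‖ ^ 2 = ‖D x‖ ^ 2) :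
    ∃ W : (LinearMap.range D).topologicalClosure →ₗᵢ[𝕜] WithLp 2 (F₁ × F₂), ∀ x,
      W ⟨D x, Submodule.le_topologicalClosure _ (LinearMap.mem_range_self D x)⟩
        = WithLp.toLp 2 (A x, B x) := by
  refine ((WithLp.linearEquiv 2 𝕜 (F₁ × F₂)).symm.toLinearMap ∘ₗ A.prod B)
    |>.exists_linearIsometry_topologicalClosure_range D fun x => ?_
  rw [← sq_eq_sq₀ (norm_nonneg _) (norm_nonneg _), ← hABD]
  exact WithLp.prod_norm_sq_eq_of_L2 _

end Extension

theorem defect_identities_and_isometries_from_defect_space_general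
    (H : Type*) [NormedAddCommGroup H] [InnerProductSpace ℂ H] [CompleteSpace H]
    (T1 T2 : H →L[ℂ] H) (hcomm : T1 ∘L T2 = T2 ∘L T1)
    (D1 D2 D : H →L[ℂ] H)
    (hD1pos : D1.IsPositive) (hD2pos : D2.IsPositive) (hDpos : D.IsPositive)
    (hD1 : D1 ∘L D1 = 1 - (ContinuousLinearMap.adjoint T1) ∘L T1)
    (hD2 : D2 ∘L D2 = 1 - (ContinuousLinearMap.adjoint T2) ∘L T2)
    (hD : D ∘L D = 1 - (ContinuousLinearMap.adjoint (T1 ∘L T2)) ∘L (T1 ∘L T2)) :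
    (∀ h : H, ‖D1 h‖ ^ 2 + ‖D2 (T1 h)‖ ^ 2 = ‖D h‖ ^ 2) ∧
    (∀ h : H, ‖D1 (T2 h)‖ ^ 2 + ‖D2 h‖ ^ 2 = ‖D h‖ ^ 2) ∧
    (∃ W1 W2 : (LinearMap.range (D : H →ₗ[ℂ] H)).topologicalClosure →ₗᵢ[ℂ] WithLp 2 (H × H),
      (∀ h : H,
        W1 ⟨D h, Submodule.le_topologicalClosure _ (LinearMap.mem_range_self (D : H →ₗ[ℂ] H) h)⟩
          = (WithLp.toLp 2 (D1 h, D2 (T1 h)) : WithLp 2 (H × H))) ∧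
      (∀ h : H,
        W2 ⟨D h, Submodule.le_topologicalClosure _ (LinearMap.mem_range_self (D : H →ₗ[ℂ] H) h)⟩
          = (WithLp.toLp 2 (D1 (T2 h), D2 h) : WithLp 2 (H × H)))) := by
  have hT : ∀ h, T1 (T2 h) = T2 (T1 h) := fun h => congr($hcomm h)
  have hnorm1 := hD1pos.isSelfAdjoint.norm_apply_sq_of_comp_self_eq_one_sub T1 hD1
  have hnorm2 := hD2pos.isSelfAdjoint.norm_apply_sq_of_comp_self_eq_one_sub T2 hD2
  have hnorm := hDpos.isSelfAdjoint.norm_apply_sq_of_comp_self_eq_one_sub (T1 ∘L T2) hD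
  have ha : ∀ h, ‖D1 h‖ ^ 2 + ‖D2 (T1 h)‖ ^ 2 = ‖D h‖ ^ 2 := fun h => by
    rw [hnorm1, hnorm2, hnorm, comp_apply, hT]; ring
  have hb : ∀ h, ‖D1 (T2 h)‖ ^ 2 + ‖D2 h‖ ^ 2 = ‖D h‖ ^ 2 := fun h => by
    rw [hnorm1, hnorm2, hnorm, comp_apply]; ring
  obtain ⟨W1, hW1⟩ := exists_linearIsometry_topologicalClosure_range_toLp_prod
    (D1 : H →ₗ[ℂ] H) ((D2 ∘L T1 : H →L[ℂ] H) : H →ₗ[ℂ] H) (D : H →ₗ[ℂ] H) ha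
  obtain ⟨W2, hW2⟩ := exists_linearIsometry_topologicalClosure_range_toLp_prod
    ((D1 ∘L T2 : H →L[ℂ] H) : H →ₗ[ℂ] H) (D2 : H →ₗ[ℂ] H) (D : H →ₗ[ℂ] H) hb
  exact ⟨ha, hb, W1, W2, hW1, hW2⟩

/-- For a commuting pair of contractions `(T1, T2)` on a complex Hilbert space with
`T = T1 T2`, and with `D1, D2, D` the positive square roots of `I - T1*T1`, `I - T2*T2`,
`I - T*T` respectively, the defect identities
`‖D1 h‖² + ‖D2 (T1 h)‖² = ‖D h‖²` and `‖D1 (T2 h)‖² + ‖D2 h‖² = ‖D h‖²` hold; consequently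
the maps `D h ↦ (D1 h, D2 (T1 h))` and `D h ↦ (D1 (T2 h), D2 h)` extend to linear isometries
from the defect space of `T` (the closure of the range of `D`) into `H ⊕₂ H`. -/
theorem defect_identities_and_isometries_from_defect_space
    (H : Type*) [NormedAddCommGroup H] [InnerProductSpace ℂ H] [CompleteSpace H]
    (T1 T2 : H →L[ℂ] H) (hcomm : T1 ∘L T2 = T2 ∘L T1)
    (hT1 : ‖T1‖ ≤ 1) (hT2 : ‖T2‖ ≤ 1)
    (D1 D2 D : H →L[ℂ] H)
    (hD1pos : D1.IsPositive) (hD2pos : D2.IsPositive) (hDpos : D.IsPositive)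
    (hD1 : D1 ∘L D1 = 1 - (ContinuousLinearMap.adjoint T1) ∘L T1)
    (hD2 : D2 ∘L D2 = 1 - (ContinuousLinearMap.adjoint T2) ∘L T2)
    (hD : D ∘L D = 1 - (ContinuousLinearMap.adjoint (T1 ∘L T2)) ∘L (T1 ∘L T2)) :
    (∀ h : H, ‖D1 h‖ ^ 2 + ‖D2 (T1 h)‖ ^ 2 = ‖D h‖ ^ 2) ∧
    (∀ h : H, ‖D1 (T2 h)‖ ^ 2 + ‖D2 h‖ ^ 2 = ‖D h‖ ^ 2) ∧
    (∃ W1 W2 : (LinearMap.range (D : H →ₗ[ℂ] H)).topologicalClosure →ₗᵢ[ℂ] WithLp 2 (H × H),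
      (∀ h : H,
        W1 ⟨D h, Submodule.le_topologicalClosure _ (LinearMap.mem_range_self (D : H →ₗ[ℂ] H) h)⟩
          = (WithLp.toLp 2 (D1 h, D2 (T1 h)) : WithLp 2 (H × H))) ∧
      (∀ h : H,
        W2 ⟨D h, Submodule.le_topologicalClosure _ (LinearMap.mem_range_self (D : H →ₗ[ℂ] H) h)⟩
          = (WithLp.toLp 2 (D1 (T2 h), D2 h) : WithLp 2 (H × H)))) :=
  defect_identities_and_isometries_from_defect_space_general H T1 T2 hcomm D1 D2 D hD1pos hD2pos
    hDpos hD1 hD2 hD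
end

section
/- Let H be a complex Hilbert space and let T1, T2 be commuting bounded operators on H with ‖T1‖ < 1 and ‖T2‖ < 1. Let D_{T1} = (I − T1*T1)^{1/2} and D_{T2} = (I − T2*T2)^{1/2}. Then there exists a unitary operator S on H ⊕₂ H such that S(D_{T1} T2 h, D_{T2} h) = (D_{T1} h, D_{T2} T1 h) for all h ∈ H. -/
/-!
Both columns `h ↦ (D₂ h, D₁ T₂ h)` and `h ↦ (D₁ h, D₂ T₁ h)` have the same Gram operator
`M = 1 - (T₁T₂)*(T₁T₂)`; this is where commutativity enters. Since `‖T₁T₂‖ < 1`, `M` is strictly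
positive, and composing with `M^(-1/2)` turns both columns into isometries `H → H ⊕₂ H`. Their first
entries are invertible because the defect operators of strict contractions are, so each isometry
maps onto the graph of an operator `B`, and it extends to a unitary by adding an isometric
parametrization of the orthogonal complement `{(-B* y, y)}` of that graph. After swapping
coordinates, `S` is one unitary composed with the inverse of the other.
-/

open ContinuousLinearMap
open scoped InnerProductSpace InnerProduct

section StarRing

variable {R : Type*} [Ring R] [StarRing R]

theorem defect_mul {D E T S : R} (hD : star D * D = 1 - star T * T)
    (hE : star E * E = 1 - star S * S) :
    star (D * S) * (D * S) + star E * E = 1 - star (T * S) * (T * S) := by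
  calc star (D * S) * (D * S) + star E * E = star S * (star D * D) * S + star E * E := by
        rw [star_mul]; noncomm_ring
    _ = 1 - star (T * S) * (T * S) := by
        rw [hD, hE, star_mul]; noncomm_ring

end StarRing

theorem isUnit_of_mul_self_eq_one_sub_star_mul_self {A : Type*} [NormedRing A] [StarRing A]
    [CStarRing A] [CompleteSpace A] {D T : A} (hD : D * D = 1 - star T * T) (hT : ‖T‖ < 1) :
    IsUnit D := by
  refine isUnit_mul_self_iff.mp (hD ▸ isUnit_one_sub_of_norm_lt_one ?_)
  rw [CStarRing.norm_star_mul_self]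
  nlinarith [norm_nonneg T]

section Isometry

variable {𝕜 E F G : Type*} [RCLike 𝕜]
  [NormedAddCommGroup E] [InnerProductSpace 𝕜 E] [NormedAddCommGroup F] [InnerProductSpace 𝕜 F]
  [NormedAddCommGroup G] [InnerProductSpace 𝕜 G]

theorem exists_linearIsometryEquiv_prod_of_orthogonal (V : E →ₗᵢ[𝕜] G) (W : F →ₗᵢ[𝕜] G)
    (horth : ∀ x y, ⟪V x, W y⟫_𝕜 = 0) (hspan : ∀ g, ∃ x y, V x + W y = g) :
    ∃ U : WithLp 2 (E × F) ≃ₗᵢ[𝕜] G, ∀ x y, U (WithLp.toLp 2 (x, y)) = V x + W y := by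
  let L : WithLp 2 (E × F) →ₗᵢ[𝕜] G :=
    { toLinearMap := (V.toLinearMap.coprod W.toLinearMap) ∘ₗ
        (WithLp.linearEquiv 2 𝕜 (E × F)).toLinearMap
      norm_map' := fun p => by
        rw [← sq_eq_sq₀ (norm_nonneg _) (norm_nonneg _), WithLp.prod_norm_sq_eq_of_L2]
        simpa [sq] using
          norm_add_sq_eq_norm_sq_add_norm_sq_of_inner_eq_zero _ _ (horth p.fst p.snd) }
  refine ⟨LinearIsometryEquiv.ofSurjective L fun g => ?_, fun x y => rfl⟩
  obtain ⟨x, y, rfl⟩ := hspan g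
  exact ⟨WithLp.toLp 2 (x, y), rfl⟩

variable [CompleteSpace E] [CompleteSpace F] [CompleteSpace G]

noncomputable def columnIsometry (X₁ : E →L[𝕜] F) (X₂ : E →L[𝕜] G)
    (hX : X₁† ∘L X₁ + X₂† ∘L X₂ = 1) : E →ₗᵢ[𝕜] WithLp 2 (F × G) where
  toLinearMap := (WithLp.linearEquiv 2 𝕜 (F × G)).symm.toLinearMap ∘ₗ (X₁.prod X₂).toLinearMap
  norm_map' u := by
    rw [← sq_eq_sq₀ (norm_nonneg _) (norm_nonneg _), WithLp.prod_norm_sq_eq_of_L2]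
    change ‖X₁ u‖ ^ 2 + ‖X₂ u‖ ^ 2 = ‖u‖ ^ 2
    rw [apply_norm_sq_eq_inner_adjoint_left, apply_norm_sq_eq_inner_adjoint_left, ← map_add,
      ← inner_add_left, ← add_apply, hX, one_apply_eq_self, inner_self_eq_norm_sq]

@[simp]
theorem columnIsometry_apply (X₁ : E →L[𝕜] F) (X₂ : E →L[𝕜] G)
    (hX : X₁† ∘L X₁ + X₂† ∘L X₂ = 1) (u : E) :
    columnIsometry X₁ X₂ hX u = WithLp.toLp 2 (X₁ u, X₂ u) := rfl

end Isometry

section Unitary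

variable {H : Type*} [NormedAddCommGroup H] [InnerProductSpace ℂ H] [CompleteSpace H]

theorem exists_unitary_extending_column (X₁ X₂ : H →L[ℂ] H)
    (hX : star X₁ * X₁ + star X₂ * X₂ = 1) (hX₁ : IsUnit X₁) :
    ∃ U : WithLp 2 (H × H) ≃ₗᵢ[ℂ] WithLp 2 (H × H),
      ∀ u, U (WithLp.toLp 2 (u, 0)) = WithLp.toLp 2 (X₁ u, X₂ u) := by
  obtain ⟨X₁, rfl⟩ := hX₁
  -- the range of the column is the graph of `B`, and `y ↦ (-B* R y, R y)` parametrizes its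
  -- orthogonal complement isometrically
  set B : H →L[ℂ] H := X₂ * ↑X₁⁻¹
  have hBX : B * X₁ = X₂ := by simp [B, mul_assoc]
  set G : H →L[ℂ] H := 1 + B * star B
  have hG : IsStrictlyPositive G := isStrictlyPositive_one.add_nonneg (mul_star_self_nonneg B)
  set R : H →L[ℂ] H := G ^ (-(1 / 2) : ℝ)
  have hR : IsSelfAdjoint R := IsSelfAdjoint.of_nonneg CFC.rpow_nonneg
  have hGRR : G * (R * R) = 1 := by
    rw [← CFC.rpow_add hG.isUnit]
    norm_num
    simpa [CFC.rpow_one G] using CFC.rpow_mul_rpow_neg (a := G) 1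
  have hRGR : R * G * R = 1 := CFC.conjugate_rpow_neg_one_half G
  clear_value R
  have hZ : star (-(star B * R)) * (-(star B * R)) + star R * R = 1 := by
    rw [← hRGR]
    simp only [G, star_neg, star_mul, star_star, hR.star_eq]
    noncomm_ring
  let V := columnIsometry (X₁ : H →L[ℂ] H) X₂ hX
  let W := columnIsometry (-(star B * R)) R hZ
  have horth : ∀ x y, ⟪V x, W y⟫_ℂ = 0 := fun x y => by
    simp [V, W, ← hBX, star_eq_adjoint, adjoint_inner_right]
  have hspan : ∀ g, ∃ x y, V x + W y = g := by
    rintro ⟨a, b⟩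
    have hGw : ∀ w, B (star B (R (R w))) + R (R w) = w := fun w => by
      simpa [G, add_comm] using congr($hGRR w)
    have hX₁ : ∀ v, (X₁ : H →L[ℂ] H) ((↑X₁⁻¹ : H →L[ℂ] H) v) = v := fun v =>
      congr($(X₁.mul_inv) v)
    have hX₂ : ∀ v, X₂ v = B ((X₁ : H →L[ℂ] H) v) := fun v => congr($hBX.symm v)
    refine ⟨(↑X₁⁻¹ : H →L[ℂ] H) (a + star B (R (R (b - B a)))), R (b - B a), ?_⟩
    simp only [V, W, columnIsometry_apply, hX₂, hX₁, mul_apply_eq_comp, neg_apply,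
      ← WithLp.toLp_add, Prod.mk_add_mk, map_add, add_assoc, hGw]
    congr 2 <;> abel
  obtain ⟨U, hU⟩ := exists_linearIsometryEquiv_prod_of_orthogonal V W horth hspan
  exact ⟨U, fun u => by simp [hU, V, W]⟩

end Unitary

/-- For a commuting pair of strict contractions `(T1, T2)` on a complex Hilbert space,
with defect operators `D1, D2` (the positive square roots of `I - Ti*Ti`), there is a
unitary `S` on `H ⊕₂ H` such that `S (D1 T2 h, D2 h) = (D1 h, D2 T1 h)` for all `h`. -/
theorem exists_unitary_intertwining_defects
    (H : Type*) [NormedAddCommGroup H] [InnerProductSpace ℂ H] [CompleteSpace H]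
    (T1 T2 : H →L[ℂ] H) (hcomm : T1 ∘L T2 = T2 ∘L T1)
    (hT1 : ‖T1‖ < 1) (hT2 : ‖T2‖ < 1)
    (D1 D2 : H →L[ℂ] H)
    (hD1pos : D1.IsPositive) (hD2pos : D2.IsPositive)
    (hD1 : D1 ∘L D1 = 1 - (ContinuousLinearMap.adjoint T1) ∘L T1)
    (hD2 : D2 ∘L D2 = 1 - (ContinuousLinearMap.adjoint T2) ∘L T2) :
    ∃ S : WithLp 2 (H × H) ≃ₗᵢ[ℂ] WithLp 2 (H × H),
      ∀ h : H,
        S (WithLp.toLp 2 (D1 (T2 h), D2 h) : WithLp 2 (H × H))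
          = (WithLp.toLp 2 (D1 h, D2 (T1 h)) : WithLp 2 (H × H)) := by
  have hD₁ : star D1 * D1 = 1 - star T1 * T1 := by rw [hD1pos.isSelfAdjoint.star_eq]; exact hD1
  have hD₂ : star D2 * D2 = 1 - star T2 * T2 := by rw [hD2pos.isSelfAdjoint.star_eq]; exact hD2
  have hD₁u : IsUnit D1 := isUnit_of_mul_self_eq_one_sub_star_mul_self hD1 hT1
  have hD₂u : IsUnit D2 := isUnit_of_mul_self_eq_one_sub_star_mul_self hD2 hT2
  set M : H →L[ℂ] H := 1 - star (T1 * T2) * (T1 * T2)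
  have hMX : star (D1 * T2) * (D1 * T2) + star D2 * D2 = M := defect_mul hD₁ hD₂
  have hMY : star (D2 * T1) * (D2 * T1) + star D1 * D1 = M := by
    rw [defect_mul hD₂ hD₁, show T2 * T1 = T1 * T2 from hcomm.symm]
  have hM : IsStrictlyPositive M := hMX ▸ IsStrictlyPositive.nonneg_add (star_mul_self_nonneg _)
    ((hD₂u.star.mul hD₂u).isStrictlyPositive (star_mul_self_nonneg _))
  set Q : H →L[ℂ] H := M ^ (-(1 / 2) : ℝ)
  have hQ : IsSelfAdjoint Q := IsSelfAdjoint.of_nonneg CFC.rpow_nonneg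
  have hQu : IsUnit Q := (IsStrictlyPositive.rpow M _ hM).isUnit
  have hQMQ : Q * M * Q = 1 := CFC.conjugate_rpow_neg_one_half M
  clear_value Q M
  obtain ⟨U, hU⟩ := exists_unitary_extending_column (D2 * Q) (D1 * T2 * Q)
    (by rw [← hQMQ, ← hMX]; simp only [star_mul, hQ.star_eq]; noncomm_ring) (hD₂u.mul hQu)
  obtain ⟨V, hV⟩ := exists_unitary_extending_column (D1 * Q) (D2 * T1 * Q)
    (by rw [← hQMQ, ← hMY]; simp only [star_mul, hQ.star_eq]; noncomm_ring) (hD₁u.mul hQu)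
  refine ⟨(LinearIsometryEquiv.withLpProdComm 2 ℂ H H).trans (U.symm.trans V), fun h => ?_⟩
  obtain ⟨u, rfl⟩ : ∃ u, Q u = h := ⟨(M * Q) h, by simpa [mul_assoc] using congr($hQMQ h)⟩
  have hU' : U.symm (WithLp.toLp 2 (D2 (Q u), D1 (T2 (Q u)))) = WithLp.toLp 2 (u, 0) := by
    rw [U.symm_apply_eq, hU]; rfl
  change V (U.symm (WithLp.toLp 2 (D2 (Q u), D1 (T2 (Q u))))) = _
  rw [hU', hV]
  rfl
end

section
/- Let H be a complex Hilbert space, let T1, T2 be commuting bounded operators on H with ‖T1‖ < 1 and ‖T2‖ < 1, let D_{T1} = (I − T1*T1)^{1/2}, D_{T2} = (I − T2*T2)^{1/2}, and suppose S is a unitary operator on H ⊕₂ H satisfying S(D_{T1} T2 h, D_{T2} h) = (D_{T1} h, D_{T2} T1 h) for all h ∈ H. On K = H ⊕₂ ℓ²(ℕ, H ⊕₂ H) define V1(h, (h1,h2), (h3,h4), …) = (T1 h, S(D_{T1} h, h2), S(h1, h4), S(h3, h6), …) and V2(h, (h1,h2), (h3,h4), …) = (T2 h, (h1', D_{T2}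 h), (h3', h2'), (h5', h4'), …), where (h_{2n−1}', h_{2n}') = S^{−1}(h_{2n−1}, h_{2n}) for n ≥ 1. Then V1 and V2 are commuting isometries on K, and for all nonnegative integers n1, n2 and all h ∈ H, the orthogonal projection of V1^{n1} V2^{n2}(h, 0) onto H equals T1^{n1} T2^{n2} h. -/
/-!
On the `ℓ²` part, `V1` pushes the first coordinates of the blocks one block forward, inserts
`D1 x₀` in front and applies `S` blockwise; `V2` applies `S⁻¹` blockwise, then pushes the second
coordinates forward and inserts `D2 x₀`. Hence `‖V x‖² - ‖x‖² = ‖T x₀‖² + ‖D x₀‖² - ‖x₀‖² = 0`.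
In `V1 V2 x` and `V2 V1 x` the unitaries cancel in every block except the first, where the two
sides agree by the intertwining relation for `S`. Since the `H`-coordinate of `V x` is `T` of the
`H`-coordinate of `x`, the compression identity follows by iteration.
-/

open ContinuousLinearMap in
theorem norm_sq_apply_add_norm_sq_defect_apply {𝕜 H : Type*} [RCLike 𝕜] [NormedAddCommGroup H]
    [InnerProductSpace 𝕜 H] [CompleteSpace H] {T D : H →L[𝕜] H} (hD : IsSelfAdjoint D)
    (hDT : D ∘L D = 1 - adjoint T ∘L T) (h : H) :
    ‖T h‖ ^ 2 + ‖D h‖ ^ 2 = ‖h‖ ^ 2 := by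
  rw [apply_norm_sq_eq_inner_adjoint_left, apply_norm_sq_eq_inner_adjoint_left, hD.adjoint_eq,
    hDT, sub_apply, one_apply_eq_self, inner_sub_left, map_sub, inner_self_eq_norm_sq]
  ring

theorem hasSum_of_eq_add_shift {a b c : ℕ → ℝ} {r s : ℝ} (ha : 0 ≤ a) (hb : 0 ≤ b)
    (hab : HasSum (fun n => a n + b n) s) (h0 : c 0 = r + b 0)
    (hsucc : ∀ n, c (n + 1) = a n + b (n + 1)) : HasSum c (r + s) := by
  obtain ⟨A, hA⟩ := hab.summable.of_nonneg_of_le ha (fun n => le_add_of_nonneg_right (hb n))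
  obtain ⟨B, hB⟩ := hab.summable.of_nonneg_of_le hb (fun n => le_add_of_nonneg_left (ha n))
  have hB' : HasSum (fun n => b (n + 1)) (B - b 0) := by
    rw [hasSum_nat_add_iff 1]; simpa using hB
  have hc : HasSum (fun n => c (n + 1)) (A + (B - b 0)) := by
    simpa only [hsucc] using hA.add hB'
  rw [hasSum_nat_add_iff 1, Finset.sum_range_one, h0] at hc
  rwa [hab.unique (hA.add hB), show r + (A + B) = A + (B - b 0) + (r + b 0) by ring]

theorem lp.hasSum_norm_sq {ι : Type*} {E : ι → Type*} [∀ i, NormedAddCommGroup (E i)]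
    (f : lp E 2) : HasSum (fun i => ‖f i‖ ^ 2) (‖f‖ ^ 2) := by
  simpa using lp.hasSum_norm (p := 2) (by norm_num) f

theorem WithLp.norm_eq_of_hasSum_lp_norm_sq {E F : Type*} [SeminormedAddCommGroup E]
    [NormedAddCommGroup F] {x y : WithLp 2 (E × lp (fun _ : ℕ => F) 2)} {r : ℝ}
    (hfst : ‖y.fst‖ ^ 2 + r = ‖x.fst‖ ^ 2)
    (hsnd : HasSum (fun n => ‖y.snd n‖ ^ 2) (r + ‖x.snd‖ ^ 2)) : ‖y‖ = ‖x‖ := by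
  have hy : ‖y‖ ^ 2 = ‖x‖ ^ 2 := by
    rw [WithLp.prod_norm_sq_eq_of_L2, WithLp.prod_norm_sq_eq_of_L2,
      (lp.hasSum_norm_sq y.snd).unique hsnd, ← hfst]
    ring
  exact (sq_eq_sq₀ (norm_nonneg _) (norm_nonneg _)).mp hy

theorem WithLp.prod_lp_ext {p q : ENNReal} {ι E : Type*} {F : ι → Type*}
    [∀ i, NormedAddCommGroup (F i)] {x y : WithLp p (E × lp F q)} (hfst : x.fst = y.fst)
    (hsnd : ∀ i, x.snd i = y.snd i) : x = y :=
  WithLp.ofLp_injective p (Prod.ext hfst (lp.ext (funext hsnd)))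

theorem WithLp.toLp_fst_snd {p : ENNReal} {α β : Type*} (u : WithLp p (α × β)) :
    WithLp.toLp p (u.fst, u.snd) = u :=
  rfl

theorem ContinuousLinearMap.pow_apply_of_semiconj {R M N : Type*} [Semiring R]
    [AddCommMonoid M] [Module R M] [TopologicalSpace M]
    [AddCommMonoid N] [Module R N] [TopologicalSpace N]
    {V : M →L[R] M} {T : N →L[R] N} {π : M → N} (h : ∀ x, π (V x) = T (π x)) (n : ℕ) (x : M) :
    π ((V ^ n) x) = (T ^ n) (π x) := by
  rw [FunLike.coe_pow_eq_iterate, FunLike.coe_pow_eq_iterate]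
  exact Function.Semiconj.iterate_right h n x

theorem ando_operators_are_commuting_isometric_dilation_general
    (H : Type*) [NormedAddCommGroup H] [InnerProductSpace ℂ H] [CompleteSpace H]
    (T1 T2 : H →L[ℂ] H) (hcomm : T1 ∘L T2 = T2 ∘L T1)
    (D1 D2 : H →L[ℂ] H)
    (hD1pos : D1.IsPositive) (hD2pos : D2.IsPositive)
    (hD1 : D1 ∘L D1 = 1 - (ContinuousLinearMap.adjoint T1) ∘L T1)
    (hD2 : D2 ∘L D2 = 1 - (ContinuousLinearMap.adjoint T2) ∘L T2)
    (S : WithLp 2 (H × H) ≃ₗᵢ[ℂ] WithLp 2 (H × H))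
    (hS : ∀ h : H,
      S (WithLp.toLp 2 (D1 (T2 h), D2 h) : WithLp 2 (H × H)) = (WithLp.toLp 2 (D1 h, D2 (T1 h)) : WithLp 2 (H × H)))
    (V1 V2 : WithLp 2 (H × lp (fun _ : ℕ => WithLp 2 (H × H)) 2) →L[ℂ]
        WithLp 2 (H × lp (fun _ : ℕ => WithLp 2 (H × H)) 2))
    (hV1fst : ∀ x, (V1 x).fst = T1 x.fst)
    (hV1zero : ∀ x, (V1 x).snd 0 = S (WithLp.toLp 2 (D1 x.fst, (x.snd 0).snd) : WithLp 2 (H × H)))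
    (hV1succ : ∀ x, ∀ n : ℕ,
      (V1 x).snd (n + 1) = S (WithLp.toLp 2 ((x.snd n).fst, (x.snd (n + 1)).snd) : WithLp 2 (H × H)))
    (hV2fst : ∀ x, (V2 x).fst = T2 x.fst)
    (hV2zero : ∀ x,
      (V2 x).snd 0 = (WithLp.toLp 2 ((S.symm (x.snd 0)).fst, D2 x.fst) : WithLp 2 (H × H)))
    (hV2succ : ∀ x, ∀ n : ℕ,
      (V2 x).snd (n + 1)
        = (WithLp.toLp 2 ((S.symm (x.snd (n + 1))).fst, (S.symm (x.snd n)).snd) : WithLp 2 (H × H))) :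
    (∀ x, ‖V1 x‖ = ‖x‖) ∧ (∀ x, ‖V2 x‖ = ‖x‖) ∧
    V1 ∘L V2 = V2 ∘L V1 ∧
    (∀ (n1 n2 : ℕ) (h : H),
      (((V1 ^ n1) * (V2 ^ n2))
          (WithLp.toLp 2 (h, 0) : WithLp 2 (H × lp (fun _ : ℕ => WithLp 2 (H × H)) 2))).fst
        = ((T1 ^ n1) * (T2 ^ n2)) h) := by
  have hnorm (u : WithLp 2 (H × H)) : ‖u‖ ^ 2 = ‖u.fst‖ ^ 2 + ‖u.snd‖ ^ 2 :=
    WithLp.prod_norm_sq_eq_of_L2 u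
  refine ⟨fun x => ?_, fun x => ?_, ?_, fun n1 n2 h => ?_⟩
  · refine WithLp.norm_eq_of_hasSum_lp_norm_sq (r := ‖D1 x.fst‖ ^ 2) ?_ ?_
    · rw [hV1fst, norm_sq_apply_add_norm_sq_defect_apply hD1pos.isSelfAdjoint hD1]
    · refine hasSum_of_eq_add_shift (fun n => sq_nonneg ‖(x.snd n).fst‖)
        (fun n => sq_nonneg ‖(x.snd n).snd‖) ?_ ?_ fun n => ?_
      · simpa only [hnorm] using lp.hasSum_norm_sq x.snd
      · rw [hV1zero, S.norm_map, hnorm]; rfl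
      · rw [hV1succ, S.norm_map, hnorm]; rfl
  · refine WithLp.norm_eq_of_hasSum_lp_norm_sq (r := ‖D2 x.fst‖ ^ 2) ?_ ?_
    · rw [hV2fst, norm_sq_apply_add_norm_sq_defect_apply hD2pos.isSelfAdjoint hD2]
    · refine hasSum_of_eq_add_shift (fun n => sq_nonneg ‖(S.symm (x.snd n)).snd‖)
        (fun n => sq_nonneg ‖(S.symm (x.snd n)).fst‖) ?_ ?_ fun n => ?_
      · simpa only [add_comm, ← hnorm, S.symm.norm_map] using lp.hasSum_norm_sq x.snd
      · rw [hV2zero, hnorm, add_comm]; rfl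
      · rw [hV2succ, hnorm, add_comm]; rfl
  · refine ContinuousLinearMap.ext fun x => WithLp.prod_lp_ext ?_ fun n => ?_
    · simpa [hV1fst, hV2fst] using congr($hcomm x.fst)
    · rcases n with _ | _ | n <;>
        simp [hV1fst, hV2fst, hV1zero, hV2zero, hV1succ, hV2succ, hS, WithLp.toLp_fst_snd]
  · rw [mul_apply_eq_comp, ContinuousLinearMap.pow_apply_of_semiconj hV1fst,
      ContinuousLinearMap.pow_apply_of_semiconj hV2fst, mul_apply_eq_comp, WithLp.toLp_fst]

/-- Given a commuting pair of strict contractions `(T1, T2)` on a complex Hilbert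
space with defect operators `D1, D2`, and a unitary `S` on `H ⊕₂ H` satisfying
`S (D1 T2 h, D2 h) = (D1 h, D2 T1 h)`, the Andô-type operators `V1, V2` defined on
`K = H ⊕₂ ℓ²(ℕ, H ⊕₂ H)` by
`V1 (h, (h1,h2), (h3,h4), …) = (T1 h, S (D1 h, h2), S (h1, h4), S (h3, h6), …)` and
`V2 (h, (h1,h2), (h3,h4), …) = (T2 h, (h1', D2 h), (h3', h2'), (h5', h4'), …)`,
where `(h_{2n-1}', h_{2n}') = S⁻¹ (h_{2n-1}, h_{2n})`, are commuting isometries, and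
the projection of `V1^{n1} V2^{n2} (h, 0)` onto `H` is `T1^{n1} T2^{n2} h`. -/
theorem ando_operators_are_commuting_isometric_dilation
    (H : Type*) [NormedAddCommGroup H] [InnerProductSpace ℂ H] [CompleteSpace H]
    (T1 T2 : H →L[ℂ] H) (hcomm : T1 ∘L T2 = T2 ∘L T1)
    (hT1 : ‖T1‖ < 1) (hT2 : ‖T2‖ < 1)
    (D1 D2 : H →L[ℂ] H)
    (hD1pos : D1.IsPositive) (hD2pos : D2.IsPositive)
    (hD1 : D1 ∘L D1 = 1 - (ContinuousLinearMap.adjoint T1) ∘L T1)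
    (hD2 : D2 ∘L D2 = 1 - (ContinuousLinearMap.adjoint T2) ∘L T2)
    (S : WithLp 2 (H × H) ≃ₗᵢ[ℂ] WithLp 2 (H × H))
    (hS : ∀ h : H,
      S (WithLp.toLp 2 (D1 (T2 h), D2 h) : WithLp 2 (H × H)) = (WithLp.toLp 2 (D1 h, D2 (T1 h)) : WithLp 2 (H × H)))
    (V1 V2 : WithLp 2 (H × lp (fun _ : ℕ => WithLp 2 (H × H)) 2) →L[ℂ]
        WithLp 2 (H × lp (fun _ : ℕ => WithLp 2 (H × H)) 2))
    (hV1fst : ∀ x, (V1 x).fst = T1 x.fst)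
    (hV1zero : ∀ x, (V1 x).snd 0 = S (WithLp.toLp 2 (D1 x.fst, (x.snd 0).snd) : WithLp 2 (H × H)))
    (hV1succ : ∀ x, ∀ n : ℕ,
      (V1 x).snd (n + 1) = S (WithLp.toLp 2 ((x.snd n).fst, (x.snd (n + 1)).snd) : WithLp 2 (H × H)))
    (hV2fst : ∀ x, (V2 x).fst = T2 x.fst)
    (hV2zero : ∀ x,
      (V2 x).snd 0 = (WithLp.toLp 2 ((S.symm (x.snd 0)).fst, D2 x.fst) : WithLp 2 (H × H)))
    (hV2succ : ∀ x, ∀ n : ℕ,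
      (V2 x).snd (n + 1)
        = (WithLp.toLp 2 ((S.symm (x.snd (n + 1))).fst, (S.symm (x.snd n)).snd) : WithLp 2 (H × H))) :
    (∀ x, ‖V1 x‖ = ‖x‖) ∧ (∀ x, ‖V2 x‖ = ‖x‖) ∧
    V1 ∘L V2 = V2 ∘L V1 ∧
    (∀ (n1 n2 : ℕ) (h : H),
      (((V1 ^ n1) * (V2 ^ n2))
          (WithLp.toLp 2 (h, 0) : WithLp 2 (H × lp (fun _ : ℕ => WithLp 2 (H × H)) 2))).fst
        = ((T1 ^ n1) * (T2 ^ n2)) h) :=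
  ando_operators_are_commuting_isometric_dilation_general H T1 T2 hcomm D1 D2 hD1pos hD2pos hD1 hD2
    S hS V1 V2 hV1fst hV1zero hV1succ hV2fst hV2zero hV2succ
end

section
/- Let X be a complex Banach space and let T1, T2 be commuting contractions on X such that each of the functions A_{T1} and A_{T2}, defined by A_{Ti}(x) = (‖x‖² − ‖Ti x‖²)^{1/2}, satisfies the triangle inequality on X. Set T = T1 T2. Then A_T(x) = (‖x‖² − ‖Tx‖²)^{1/2} satisfies A_T(x)² = A_{T1}(x)² + A_{T2}(T1 x)² for all x, and A_T satisfies the triangle inequality: A_T(x + y) ≤ A_T(x) + A_T(y) for all x, y ∈ X. If moreover ‖T1 T2‖ < 1, then A_T is a norm on X, i.e. in addition A_T(x) = 0 implies x = 0 and A_T(λx) = |λ| A_T(x) for all scalars λ. -/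
/-- Minkowski inequality in the Euclidean plane. -/
lemma mink_aux (a b c d : ℝ) (ha : 0 ≤ a) (hb : 0 ≤ b) (hc : 0 ≤ c) (hd : 0 ≤ d) :
    Real.sqrt ((a + b) ^ 2 + (c + d) ^ 2)
      ≤ Real.sqrt (a ^ 2 + c ^ 2) + Real.sqrt (b ^ 2 + d ^ 2) := by
  set s := Real.sqrt (a ^ 2 + c ^ 2) with hs
  set t := Real.sqrt (b ^ 2 + d ^ 2) with ht
  have hs0 : 0 ≤ s := Real.sqrt_nonneg _
  have ht0 : 0 ≤ t := Real.sqrt_nonneg _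
  have hs2 : s ^ 2 = a ^ 2 + c ^ 2 := Real.sq_sqrt (by positivity)
  have ht2 : t ^ 2 = b ^ 2 + d ^ 2 := Real.sq_sqrt (by positivity)
  have hst : a * b + c * d ≤ s * t := by
    nlinarith [sq_nonneg (a * d - b * c), sq_nonneg (s * t - a * b - c * d),
      mul_nonneg hs0 ht0, sq_nonneg (s * t + a * b + c * d)]
  have h1 : (a + b) ^ 2 + (c + d) ^ 2 ≤ (s + t) ^ 2 := by nlinarith
  calc Real.sqrt ((a + b) ^ 2 + (c + d) ^ 2) ≤ Real.sqrt ((s + t) ^ 2) :=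
        Real.sqrt_le_sqrt h1
    _ = s + t := Real.sqrt_sq (by positivity)

/-- (Lemma 2.2 (i)). If `T1, T2` are commuting contractions on a complex Banach space
such that `A_{T1}` and `A_{T2}` (where `A_T x = (‖x‖² - ‖Tx‖²)^{1/2}`) satisfy the
triangle inequality, then for `T = T1 T2` one has
`A_T(x)² = A_{T1}(x)² + A_{T2}(T1 x)²`, the function `A_T` satisfies the triangle
inequality, and if moreover `‖T1 T2‖ < 1` then `A_T` is a norm (positive definite
and absolutely homogeneous as well). -/
theorem A_of_product_is_norm
    (X : Type*) [NormedAddCommGroup X] [NormedSpace ℂ X] [CompleteSpace X]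
    (T1 T2 : X →L[ℂ] X) (hcomm : T1 ∘L T2 = T2 ∘L T1)
    (hT1 : ‖T1‖ ≤ 1) (hT2 : ‖T2‖ ≤ 1)
    (htri1 : ∀ x y : X,
      Real.sqrt (‖x + y‖ ^ 2 - ‖T1 (x + y)‖ ^ 2)
        ≤ Real.sqrt (‖x‖ ^ 2 - ‖T1 x‖ ^ 2) + Real.sqrt (‖y‖ ^ 2 - ‖T1 y‖ ^ 2))
    (htri2 : ∀ x y : X,
      Real.sqrt (‖x + y‖ ^ 2 - ‖T2 (x + y)‖ ^ 2)
        ≤ Real.sqrt (‖x‖ ^ 2 - ‖T2 x‖ ^ 2) + Real.sqrt (‖y‖ ^ 2 - ‖T2 y‖ ^ 2)) :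
    (∀ x : X,
      Real.sqrt (‖x‖ ^ 2 - ‖(T1 ∘L T2) x‖ ^ 2) ^ 2
        = Real.sqrt (‖x‖ ^ 2 - ‖T1 x‖ ^ 2) ^ 2
          + Real.sqrt (‖T1 x‖ ^ 2 - ‖T2 (T1 x)‖ ^ 2) ^ 2) ∧
    (∀ x y : X,
      Real.sqrt (‖x + y‖ ^ 2 - ‖(T1 ∘L T2) (x + y)‖ ^ 2)
        ≤ Real.sqrt (‖x‖ ^ 2 - ‖(T1 ∘L T2) x‖ ^ 2)
          + Real.sqrt (‖y‖ ^ 2 - ‖(T1 ∘L T2) y‖ ^ 2)) ∧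
    (‖T1 ∘L T2‖ < 1 →
      (∀ x : X, Real.sqrt (‖x‖ ^ 2 - ‖(T1 ∘L T2) x‖ ^ 2) = 0 → x = 0) ∧
      (∀ (c : ℂ) (x : X),
        Real.sqrt (‖c • x‖ ^ 2 - ‖(T1 ∘L T2) (c • x)‖ ^ 2)
          = ‖c‖ * Real.sqrt (‖x‖ ^ 2 - ‖(T1 ∘L T2) x‖ ^ 2))) := by
  have hle1 : ∀ x : X, ‖T1 x‖ ≤ ‖x‖ := fun x =>
    (T1.le_opNorm x).trans (by nlinarith [norm_nonneg x])
  have hle2 : ∀ x : X, ‖T2 x‖ ≤ ‖x‖ := fun x =>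
    (T2.le_opNorm x).trans (by nlinarith [norm_nonneg x])
  have heval : ∀ x : X, (T1 ∘L T2) x = T2 (T1 x) := fun x => by
    rw [hcomm]; rfl
  have hA : ∀ x : X, 0 ≤ ‖x‖ ^ 2 - ‖T1 x‖ ^ 2 := fun x => by
    have := hle1 x; nlinarith [norm_nonneg (T1 x)]
  have hB : ∀ x : X, 0 ≤ ‖T1 x‖ ^ 2 - ‖T2 (T1 x)‖ ^ 2 := fun x => by
    have := hle2 (T1 x); nlinarith [norm_nonneg (T2 (T1 x))]
  have hsplit : ∀ x : X,
      Real.sqrt (‖x‖ ^ 2 - ‖(T1 ∘L T2) x‖ ^ 2) ^ 2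
        = Real.sqrt (‖x‖ ^ 2 - ‖T1 x‖ ^ 2) ^ 2
          + Real.sqrt (‖T1 x‖ ^ 2 - ‖T2 (T1 x)‖ ^ 2) ^ 2 := fun x => by
    rw [heval x, Real.sq_sqrt (by linarith [hA x, hB x]),
      Real.sq_sqrt (hA x), Real.sq_sqrt (hB x)]
    ring
  refine ⟨hsplit, ?_, ?_⟩
  · intro x y
    have key : ∀ z : X,
        Real.sqrt (‖z‖ ^ 2 - ‖(T1 ∘L T2) z‖ ^ 2)
          = Real.sqrt (Real.sqrt (‖z‖ ^ 2 - ‖T1 z‖ ^ 2) ^ 2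
              + Real.sqrt (‖T1 z‖ ^ 2 - ‖T2 (T1 z)‖ ^ 2) ^ 2) := fun z => by
      rw [← hsplit z, Real.sqrt_sq (Real.sqrt_nonneg _)]
    rw [key (x + y), key x, key y]
    set a := Real.sqrt (‖x‖ ^ 2 - ‖T1 x‖ ^ 2)
    set b := Real.sqrt (‖y‖ ^ 2 - ‖T1 y‖ ^ 2)
    set c := Real.sqrt (‖T1 x‖ ^ 2 - ‖T2 (T1 x)‖ ^ 2)
    set d := Real.sqrt (‖T1 y‖ ^ 2 - ‖T2 (T1 y)‖ ^ 2)
    have hp : Real.sqrt (‖x + y‖ ^ 2 - ‖T1 (x + y)‖ ^ 2) ≤ a + b := htri1 x y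
    have hq : Real.sqrt (‖T1 (x + y)‖ ^ 2 - ‖T2 (T1 (x + y))‖ ^ 2) ≤ c + d := by
      have := htri2 (T1 x) (T1 y)
      rwa [← map_add T1 x y] at this
    calc Real.sqrt (Real.sqrt (‖x + y‖ ^ 2 - ‖T1 (x + y)‖ ^ 2) ^ 2
            + Real.sqrt (‖T1 (x + y)‖ ^ 2 - ‖T2 (T1 (x + y))‖ ^ 2) ^ 2)
        ≤ Real.sqrt ((a + b) ^ 2 + (c + d) ^ 2) := by
          apply Real.sqrt_le_sqrt
          have h1 := pow_le_pow_left₀ (Real.sqrt_nonneg _) hp 2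
          have h2 := pow_le_pow_left₀ (Real.sqrt_nonneg _) hq 2
          linarith
      _ ≤ Real.sqrt (a ^ 2 + c ^ 2) + Real.sqrt (b ^ 2 + d ^ 2) :=
          mink_aux a b c d (Real.sqrt_nonneg _) (Real.sqrt_nonneg _)
            (Real.sqrt_nonneg _) (Real.sqrt_nonneg _)
  · intro hlt
    constructor
    · intro x hx
      by_contra hx0
      have hxpos : 0 < ‖x‖ := norm_pos_iff.mpr hx0
      have h1 : ‖(T1 ∘L T2) x‖ < ‖x‖ := by
        calc ‖(T1 ∘L T2) x‖ ≤ ‖T1 ∘L T2‖ * ‖x‖ := (T1 ∘L T2).le_opNorm x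
          _ < 1 * ‖x‖ := by exact mul_lt_mul_of_pos_right hlt hxpos
          _ = ‖x‖ := one_mul _
      have h2 : 0 < ‖x‖ ^ 2 - ‖(T1 ∘L T2) x‖ ^ 2 := by
        nlinarith [norm_nonneg ((T1 ∘L T2) x)]
      have := Real.sqrt_pos.mpr h2
      linarith [this, hx ▸ this]
    · intro c x
      rw [map_smul, norm_smul, norm_smul]
      have : ‖c‖ ^ 2 * ‖x‖ ^ 2 - ‖c‖ ^ 2 * ‖(T1 ∘L T2) x‖ ^ 2
          = ‖c‖ ^ 2 * (‖x‖ ^ 2 - ‖(T1 ∘L T2) x‖ ^ 2) := by ring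
      rw [mul_pow, mul_pow, this, Real.sqrt_mul (by positivity),
        Real.sqrt_sq (norm_nonneg c)]
end
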